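/- arXiv:1809.02549 — 4 statements merged into one kernel-verified Lean document; each statement's English description precedes it below -/
import Mathlib

section
/- Let (m_n) be an increasing sequence in [1,∞) with lim_{s→∞} m_s/s = +∞. Let A = {d_n : n ∈ ℕ} where (d_n) is a strictly increasing sequence of positive integers with bounded gaps, i.e. the sequence (d_{n+1} − d_n) is bounded. Then B̲d_{l;(m_n)}(A) = B̲d_{u;(m_n)}(A) = +∞. -/
open Filter Set
open scoped ENNReal symmDiff

/-- Number of elements of `A` in the integer interval `[a, b]`, as an extended nonneg real. -/
noncomputable def cnt (A : Set ℕ) (a b : ℕ) : ℝ≥0∞ :=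
  (Nat.card (↥(A ∩ Set.Icc a b)) : ℝ≥0∞)

/-- Lower `(m_n)`-density: `liminf_n |A ∩ [1, m_n]| / n`. -/
noncomputable def lowDens (m : ℕ → ℝ) (A : Set ℕ) : ℝ≥0∞ :=
  Filter.liminf (fun n : ℕ => cnt A 1 ⌊m n⌋₊ / (n : ℝ≥0∞)) Filter.atTop

/-- Upper `(m_n)`-density: `limsup_n |A ∩ [1, m_n]| / n`. -/
noncomputable def upDens (m : ℕ → ℝ) (A : Set ℕ) : ℝ≥0∞ :=
  Filter.limsup (fun n : ℕ => cnt A 1 ⌊m n⌋₊ / (n : ℝ≥0∞)) Filter.atTop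

/-- Lower `l;(m_n)`-Banach density: `liminf_s liminf_n |A ∩ [n+1, n+m_s]| / s`. -/
noncomputable def BdLL (m : ℕ → ℝ) (A : Set ℕ) : ℝ≥0∞ :=
  Filter.liminf (fun s : ℕ =>
    Filter.liminf (fun n : ℕ => cnt A (n + 1) (n + ⌊m s⌋₊) / (s : ℝ≥0∞)) Filter.atTop)
    Filter.atTop

/-- Lower `u;(m_n)`-Banach density: `limsup_s liminf_n |A ∩ [n+1, n+m_s]| / s`. -/
noncomputable def BdLU (m : ℕ → ℝ) (A : Set ℕ) : ℝ≥0∞ :=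
  Filter.limsup (fun s : ℕ =>
    Filter.liminf (fun n : ℕ => cnt A (n + 1) (n + ⌊m s⌋₊) / (s : ℝ≥0∞)) Filter.atTop)
    Filter.atTop

/-- Upper `l;(m_n)`-Banach density: `liminf_s limsup_n |A ∩ [n+1, n+m_s]| / s`. -/
noncomputable def BdUL (m : ℕ → ℝ) (A : Set ℕ) : ℝ≥0∞ :=
  Filter.liminf (fun s : ℕ =>
    Filter.limsup (fun n : ℕ => cnt A (n + 1) (n + ⌊m s⌋₊) / (s : ℝ≥0∞)) Filter.atTop)
    Filter.atTop

/-- Upper `u;(m_n)`-Banach density: `limsup_s limsup_n |A ∩ [n+1, n+m_s]| / s`. -/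
noncomputable def BdUU (m : ℕ → ℝ) (A : Set ℕ) : ℝ≥0∞ :=
  Filter.limsup (fun s : ℕ =>
    Filter.limsup (fun n : ℕ => cnt A (n + 1) (n + ⌊m s⌋₊) / (s : ℝ≥0∞)) Filter.atTop)
    Filter.atTop


lemma gap_chain (d : ℕ → ℕ) (hd : StrictMono d) (M : ℕ)
    (hgap : ∀ n, d (n + 1) - d n ≤ M) (k i : ℕ) : d (k + i) ≤ d k + i * M := by
  induction i with
  | zero => simp
  | succ i ih =>
    have h1 : d (k + i + 1) ≤ d (k + i) + M := by
      have := hgap (k + i)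
      omega
    calc d (k + (i+1)) = d (k + i + 1) := by ring_nf
      _ ≤ d (k + i) + M := h1
      _ ≤ d k + i * M + M := by omega
      _ = d k + (i+1) * M := by ring

lemma card_lower (d : ℕ → ℕ) (hd : StrictMono d) (M : ℕ) (hM : 0 < M)
    (hgap : ∀ n, d (n + 1) - d n ≤ M) (n L : ℕ) (hn : d 0 ≤ n) :
    L / M ≤ Nat.card (↥(Set.range d ∩ Set.Icc (n + 1) (n + L))) := by
  have hex : ∃ k, n + 1 ≤ d k := ⟨n + 1, le_trans (le_refl _) hd.le_apply⟩
  classical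
  set k := Nat.find hex with hk
  have hk1 : n + 1 ≤ d k := Nat.find_spec hex
  have hk0 : k ≠ 0 := by
    intro h
    have := hk1
    rw [h] at this
    omega
  have hklt : d (k - 1) < n + 1 := by
    have := Nat.find_min hex (m := k - 1) (by omega)
    omega
  have hkM : d k ≤ n + M := by
    have h1 : d ((k-1) + 1) ≤ d (k-1) + M := by
      have := hgap (k-1); have := hd (Nat.lt_succ_self (k-1)); omega
    have : (k-1) + 1 = k := by omega
    rw [this] at h1
    omega
  have hfin : (Set.range d ∩ Set.Icc (n + 1) (n + L)).Finite :=
    (Set.finite_Icc (n+1) (n+L)).inter_of_right _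
  haveI := hfin.to_subtype
  have hmem : ∀ i : Fin (L / M), d (k + i) ∈ Set.range d ∩ Set.Icc (n + 1) (n + L) := by
    intro ⟨i, hi⟩
    refine ⟨⟨k + i, rfl⟩, ⟨le_trans hk1 (hd.monotone (by omega)), ?_⟩⟩
    have h1 : d (k + i) ≤ d k + i * M := gap_chain d hd M hgap k i
    have h2 : (i + 1) * M ≤ L := by
      have : i + 1 ≤ L / M := hi
      calc (i+1) * M ≤ (L / M) * M := Nat.mul_le_mul_right _ this
        _ ≤ L := Nat.div_mul_le_self L M
    simp only
    nlinarith [hkM]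
  have hinj : Function.Injective (fun i : Fin (L / M) =>
      (⟨d (k + i), hmem i⟩ : ↥(Set.range d ∩ Set.Icc (n + 1) (n + L)))) := by
    intro a b hab
    simp only [Subtype.mk.injEq] at hab
    have h := hd.injective hab
    exact Fin.ext (by omega)
  have := Nat.card_le_card_of_injective _ hinj
  simpa only [Nat.card_eq_fintype_card, Fintype.card_fin] using this


theorem stmt7' (m : ℕ → ℝ) (hm : Monotone m) (h1 : ∀ n, 1 ≤ m n)
    (hlim : Filter.Tendsto (fun s : ℕ => m s / (s : ℝ)) Filter.atTop Filter.atTop)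
    (d : ℕ → ℕ) (hd : StrictMono d) (hdpos : ∀ n, 0 < d n)
    (hgap : ∃ M : ℕ, ∀ n, d (n + 1) - d n ≤ M)
    (card_lower : ∀ (M : ℕ), (∀ n, d (n + 1) - d n ≤ M) → ∀ n L : ℕ, d 0 ≤ n →
      L / M ≤ Nat.card (↥(Set.range d ∩ Set.Icc (n + 1) (n + L)))) :
    (Filter.liminf (fun s : ℕ =>
      Filter.liminf (fun n : ℕ =>
        ((Nat.card (↥(Set.range d ∩ Set.Icc (n+1) (n + ⌊m s⌋₊))) : ℝ≥0∞)) / (s : ℝ≥0∞)) Filter.atTop)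
      Filter.atTop) = ⊤ := by
  obtain ⟨M, hgapM⟩ := hgap
  have hM : 0 < M := by
    have h1 := hgapM 0
    have h2 : d 0 < d (0 + 1) := hd (Nat.lt_succ_self 0)
    omega
  -- for all C, C ≤ liminf
  have key : ∀ C : ℕ, (C : ℝ≥0∞) ≤ Filter.liminf (fun s : ℕ =>
      Filter.liminf (fun n : ℕ =>
        ((Nat.card (↥(Set.range d ∩ Set.Icc (n+1) (n + ⌊m s⌋₊))) : ℝ≥0∞)) / (s : ℝ≥0∞)) Filter.atTop)
      Filter.atTop := by
    intro C
    refine Filter.le_liminf_of_le (by isBoundedDefault) ?_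
    -- eventually in s
    have hev : ∀ᶠ s : ℕ in atTop, ((C + 1) * M * s : ℝ) ≤ m s ∧ 1 ≤ s := by
      have h2 : ∀ᶠ s : ℕ in atTop, (((C + 1) * M : ℕ) : ℝ) ≤ m s / (s : ℝ) :=
        hlim.eventually_ge_atTop _
      filter_upwards [h2, Filter.eventually_ge_atTop 1] with s hs hs1
      refine ⟨?_, hs1⟩
      have hspos : (0:ℝ) < (s:ℝ) := by exact_mod_cast hs1
      have h3 : (((C + 1) * M : ℕ) : ℝ) * (s:ℝ) ≤ m s := by
        have := (le_div_iff₀ hspos).mp hs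
        linarith
      calc ((C + 1) * M * s : ℝ) = (((C + 1) * M : ℕ) : ℝ) * (s:ℝ) := by push_cast; ring
        _ ≤ m s := h3
    filter_upwards [hev] with s hs
    obtain ⟨hms, hs1⟩ := hs
    -- floor bound: (C+1)*M*s ≤ ⌊m s⌋₊
    have hfloor : (C + 1) * M * s ≤ ⌊m s⌋₊ := by
      apply Nat.le_floor
      push_cast
      push_cast at hms
      linarith
    -- inner liminf bound
    have hstep : ((⌊m s⌋₊ / M : ℕ) : ℝ≥0∞) / (s : ℝ≥0∞) ≤
        Filter.liminf (fun n : ℕ =>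
          ((Nat.card (↥(Set.range d ∩ Set.Icc (n+1) (n + ⌊m s⌋₊))) : ℝ≥0∞)) / (s : ℝ≥0∞)) Filter.atTop := by
      refine Filter.le_liminf_of_le (by isBoundedDefault)
        (Filter.eventually_atTop.mpr ⟨d 0, fun n hn => ?_⟩)
      gcongr
      exact_mod_cast card_lower M hgapM n ⌊m s⌋₊ hn
    refine le_trans ?_ hstep
    have hdiv : (C + 1) * s ≤ ⌊m s⌋₊ / M := by
      rw [Nat.le_div_iff_mul_le hM]
      calc (C+1) * s * M = (C+1) * M * s := by ring
        _ ≤ ⌊m s⌋₊ := hfloor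
    calc (C : ℝ≥0∞) ≤ ((C : ℝ≥0∞) + 1) := le_self_add
      _ = ((C+1) * s : ℕ) / (s : ℝ≥0∞) := by
          push_cast
          rw [mul_div_assoc, ENNReal.div_self (by exact_mod_cast Nat.one_le_iff_ne_zero.mp hs1)
            (by simp), mul_one]
      _ ≤ ((⌊m s⌋₊ / M : ℕ) : ℝ≥0∞) / (s : ℝ≥0∞) := by
          gcongr
 
  by_contra hne
  obtain ⟨C, hC⟩ := ENNReal.exists_nat_gt hne
  exact absurd (key C) (not_le.mpr hC)

theorem stmt7 (m : ℕ → ℝ) (hm : Monotone m) (h1 : ∀ n, 1 ≤ m n)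
    (hlim : Filter.Tendsto (fun s : ℕ => m s / (s : ℝ)) Filter.atTop Filter.atTop)
    (d : ℕ → ℕ) (hd : StrictMono d) (hdpos : ∀ n, 0 < d n)
    (hgap : ∃ M : ℕ, ∀ n, d (n + 1) - d n ≤ M) :
    BdLL m (Set.range d) = ⊤ ∧ BdLU m (Set.range d) = ⊤ := by
  have hM : ∃ M : ℕ, 0 < M ∧ ∀ n, d (n + 1) - d n ≤ M := by
    obtain ⟨M, hgapM⟩ := hgap
    refine ⟨M + 1, Nat.succ_pos _, fun n => le_trans (hgapM n) (Nat.le_succ _)⟩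
  obtain ⟨M, hMpos, hgapM⟩ := hM
  have hLL : BdLL m (Set.range d) = ⊤ := by
    have := stmt7' m hm h1 hlim d hd hdpos ⟨M, hgapM⟩
      (fun M' hg' n L hn => card_lower d hd M' (by
        have h1' := hg' 0
        have h2' : d 0 < d (0 + 1) := hd (Nat.lt_succ_self 0)
        omega) hg' n L hn)
    exact this
  refine ⟨hLL, ?_⟩
  rw [eq_top_iff, ← hLL]
  exact Filter.liminf_le_limsup
end

section
/- Let (m_n) be an increasing sequence in [1,∞) and A ⊆ ℕ. Then B̲d_{l;(m_n)}(A) + B̲d_{l;(m_n)}(ℕ \ A) ≤ liminf_{n→∞} m_n/n. In particular, if liminf_{n→∞} m_n/n = 0, then B̲d_{l;(m_n)}(A) = B̲d_{l;(m_n)}(ℕ \ A) = 0. -/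
open Filter Set
open scoped ENNReal symmDiff

lemma cnt_add_compl (A : Set ℕ) (n k : ℕ) :
    cnt A (n + 1) (n + k) + cnt Aᶜ (n + 1) (n + k) = (k : ℝ≥0∞) := by
  unfold cnt
  rw [Nat.card_coe_set_eq, Nat.card_coe_set_eq, ← Nat.cast_add]
  congr 1
  have h1 : A ∩ Set.Icc (n+1) (n+k) = Set.Icc (n+1) (n+k) ∩ A := by rw [Set.inter_comm]
  have h2 : Aᶜ ∩ Set.Icc (n+1) (n+k) = Set.Icc (n+1) (n+k) \ A := by
    rw [Set.diff_eq, Set.inter_comm]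
  rw [h1, h2, Set.ncard_inter_add_ncard_diff_eq_ncard _ _ (Set.finite_Icc _ _), ← Finset.coe_Icc,
    Set.ncard_coe_finset, Nat.card_Icc]
  omega


lemma myLiminfAdd (u v : ℕ → ℝ≥0∞) :
    Filter.liminf u Filter.atTop + Filter.liminf v Filter.atTop
      ≤ Filter.liminf (fun n => u n + v n) Filter.atTop := by
  rw [Filter.liminf_eq_iSup_iInf_of_nat, Filter.liminf_eq_iSup_iInf_of_nat,
    Filter.liminf_eq_iSup_iInf_of_nat]
  have hmono : ∀ w : ℕ → ℝ≥0∞, Monotone (fun n : ℕ => ⨅ i ≥ n, w i) :=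
    fun w a b hab => le_iInf₂ fun i hi => iInf₂_le i (le_trans hab hi)
  rw [ENNReal.iSup_add_iSup_of_monotone (hmono u) (hmono v)]
  refine iSup_mono fun n => le_iInf₂ fun i hi => ?_
  exact add_le_add (iInf₂_le i hi) (iInf₂_le i hi)

theorem stmt13 (m : ℕ → ℝ) (hm : Monotone m) (h1 : ∀ n, 1 ≤ m n) (A : Set ℕ) :
    BdLL m A + BdLL m Aᶜ ≤
        Filter.liminf (fun n : ℕ => ENNReal.ofReal (m n / (n : ℝ))) Filter.atTop ∧
      (Filter.liminf (fun n : ℕ => ENNReal.ofReal (m n / (n : ℝ))) Filter.atTop = 0 →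
        BdLL m A = 0 ∧ BdLL m Aᶜ = 0) := by
  have key : BdLL m A + BdLL m Aᶜ ≤
      Filter.liminf (fun n : ℕ => ENNReal.ofReal (m n / (n : ℝ))) Filter.atTop := by
    unfold BdLL
    refine le_trans (myLiminfAdd _ _) (liminf_le_liminf ?_)
    filter_upwards [eventually_ge_atTop 1] with s hs
    refine le_trans (myLiminfAdd _ _) ?_
    have heq : (fun n : ℕ => cnt A (n + 1) (n + ⌊m s⌋₊) / (s : ℝ≥0∞)
        + cnt Aᶜ (n + 1) (n + ⌊m s⌋₊) / (s : ℝ≥0∞))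
        = fun _ : ℕ => ((⌊m s⌋₊ : ℝ≥0∞) / (s : ℝ≥0∞)) := by
      funext n
      rw [ENNReal.div_add_div_same, cnt_add_compl]
    have : Filter.liminf (fun n : ℕ => cnt A (n + 1) (n + ⌊m s⌋₊) / (s : ℝ≥0∞)
        + cnt Aᶜ (n + 1) (n + ⌊m s⌋₊) / (s : ℝ≥0∞)) Filter.atTop
        = (⌊m s⌋₊ : ℝ≥0∞) / (s : ℝ≥0∞) := by
      rw [heq, liminf_const]
    rw [this]
    have hspos : (0 : ℝ) < (s : ℝ) := by exact_mod_cast hs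
    rw [ENNReal.ofReal_div_of_pos hspos, ENNReal.ofReal_natCast]
    refine ENNReal.div_le_div_right ?_ _
    calc (⌊m s⌋₊ : ℝ≥0∞) = ENNReal.ofReal (⌊m s⌋₊ : ℝ) := (ENNReal.ofReal_natCast _).symm
      _ ≤ ENNReal.ofReal (m s) :=
        ENNReal.ofReal_le_ofReal (Nat.floor_le (le_trans zero_le_one (h1 s)))
  refine ⟨key, fun h => ?_⟩
  rw [h, le_zero_iff, add_eq_zero] at key
  exact key
end

section
/- Let (m_n) be an increasing sequence in [1,∞) and A, B ⊆ ℕ. Then B̲d_{l;(m_n)}(A Δ B) + B̲d_{l;(m_n)}(A ∩ B) ≤ B̲d_{l;(m_n)}(A ∪ B), where A Δ B denotes the symmetric difference. -/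
open Filter Set
open scoped ENNReal symmDiff

lemma sup_Iio {d : ℝ≥0∞} : (⨆ x ∈ Iio d, x) = d := by
  refine le_antisymm (iSup₂_le fun x hx => hx.le) ?_
  refine le_of_forall_lt fun e he => ?_
  obtain ⟨f, hef, hfd⟩ := exists_between he
  calc e < f := hef
    _ ≤ ⨆ x ∈ Iio d, x := le_iSup₂ (f := fun (x : ℝ≥0∞) (_ : x ∈ Iio d) => x) f hfd

lemma enn_add_le_of_forall_lt {a b c : ℝ≥0∞} (hb : b ≤ c) (ha : a ≤ c)
    (h : ∀ x < a, ∀ y < b, x + y ≤ c) : a + b ≤ c := by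
  rcases eq_or_ne a 0 with rfl | ha0
  · simpa using hb
  rcases eq_or_ne b 0 with rfl | hb0
  · simpa using ha
  have key : (⨆ x ∈ Iio a, x) + (⨆ y ∈ Iio b, y) ≤ c := by
    rw [ENNReal.biSup_add (s := Iio a) ⟨0, pos_iff_ne_zero.2 ha0⟩ (f := fun x => x)]
    refine iSup₂_le fun x hx => ?_
    rw [ENNReal.add_biSup' (p := fun y => y ∈ Iio b) ⟨0, pos_iff_ne_zero.2 hb0⟩]
    exact iSup₂_le fun y hy => h x hx y hy
  rwa [sup_Iio, sup_Iio] at key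

lemma enn_le_liminf_add {α : Type*} {f : Filter α} {u v : α → ℝ≥0∞} :
    Filter.liminf u f + Filter.liminf v f ≤ Filter.liminf (u + v) f := by
  refine enn_add_le_of_forall_lt ?_ ?_ fun x hx y hy => ?_
  · exact Filter.liminf_le_liminf (Filter.Eventually.of_forall fun a => le_add_self)
  · exact Filter.liminf_le_liminf (Filter.Eventually.of_forall fun a => le_self_add)
  · refine le_liminf_of_le (by isBoundedDefault) ?_
    filter_upwards [eventually_lt_of_lt_liminf hx, eventually_lt_of_lt_liminf hy] with a h1 h2
    exact add_le_add h1.le h2.le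

theorem stmt16 (m : ℕ → ℝ) (hm : Monotone m) (h1 : ∀ n, 1 ≤ m n) (A B : Set ℕ) :
    BdLL m (A ∆ B) + BdLL m (A ∩ B) ≤ BdLL m (A ∪ B) := by
    classical
  -- counting identity
  have cnt_eq : ∀ a b : ℕ, cnt (A ∆ B) a b + cnt (A ∩ B) a b = cnt (A ∪ B) a b := by
    intro a b
    unfold cnt
    rw [← Nat.cast_add]
    congr 1
    rw [Nat.card_coe_set_eq, Nat.card_coe_set_eq, Nat.card_coe_set_eq]
    have hU : (A ∆ B ∩ Set.Icc a b) ∪ (A ∩ B ∩ Set.Icc a b) = (A ∪ B) ∩ Set.Icc a b := by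
      ext x
      simp only [Set.symmDiff_def, Set.mem_union, Set.mem_inter_iff, Set.mem_diff]
      tauto
    rw [← hU]
    rw [Set.ncard_union_eq]
    · exact (disjoint_symmDiff_inf A B).mono Set.inter_subset_left Set.inter_subset_left
    all_goals exact (Set.finite_Icc a b).inter_of_right _
  have inner_le : ∀ s : ℕ,
      Filter.liminf (fun n : ℕ => cnt (A ∆ B) (n + 1) (n + ⌊m s⌋₊) / (s : ℝ≥0∞)) Filter.atTop +
      Filter.liminf (fun n : ℕ => cnt (A ∩ B) (n + 1) (n + ⌊m s⌋₊) / (s : ℝ≥0∞)) Filter.atTop ≤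
      Filter.liminf (fun n : ℕ => cnt (A ∪ B) (n + 1) (n + ⌊m s⌋₊) / (s : ℝ≥0∞)) Filter.atTop := by
    intro s
    refine le_trans enn_le_liminf_add (le_of_eq ?_)
    congr 1
    funext n
    simp only [Pi.add_apply]
    rw [ENNReal.div_add_div_same, cnt_eq]
  calc BdLL m (A ∆ B) + BdLL m (A ∩ B)
      ≤ Filter.liminf ((fun s : ℕ =>
          Filter.liminf (fun n : ℕ => cnt (A ∆ B) (n + 1) (n + ⌊m s⌋₊) / (s : ℝ≥0∞)) Filter.atTop) +
        (fun s : ℕ =>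
          Filter.liminf (fun n : ℕ => cnt (A ∩ B) (n + 1) (n + ⌊m s⌋₊) / (s : ℝ≥0∞)) Filter.atTop))
        Filter.atTop := enn_le_liminf_add
    _ ≤ BdLL m (A ∪ B) := by
        refine Filter.liminf_le_liminf (Filter.Eventually.of_forall fun s => ?_)
        exact inner_le s
end

section
/- Let (m_n) be an increasing sequence in [1,∞) with lim_{n→∞} m_n/n = k for some k ∈ [0,∞). Then for every A ⊆ ℕ, B̄d_{l;(m_n)}(A) = B̄d_{u;(m_n)}(A) = k·B̄d(A) and B̲d_{l;(m_n)}(A) = B̲d_{u;(m_n)}(A) = k·B̲d(A), where B̄d and B̲d denote the usual upper and lower Banach densities. -/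
/-!
The counting function `L ↦ limsup_n |A ∩ [n+1, n+L]|` is subadditive and
`L ↦ liminf_n |A ∩ [n+1, n+L]|` is superadditive, so by Fekete's lemma both, divided by `L`,
converge; the limits are the upper and lower Banach densities. The inner limits in the
`(m_n)`-densities are these counting functions evaluated at `L = ⌊m_s⌋`, divided by `s`, and
`⌊m_s⌋ / s → k`; hence the outer `limsup` and `liminf` over `s` agree and equal `k` times the
Banach density.
-/

open Filter Set
open scoped ENNReal symmDiff

open scoped Topology

namespace ENNReal

variable {α : Type*} {f : Filter α}

-- `ENNReal.limsup_add_le` needs `CountableInterFilter f`, which `atTop : Filter ℕ` is not.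
theorem limsup_add_le' (u v : α → ℝ≥0∞) : limsup (u + v) f ≤ limsup u f + limsup v f := by
  refine le_of_forall_gt fun c hc => ?_
  obtain ⟨a, ha, b, hb, hab⟩ := exists_add_lt_of_add_lt hc
  refine lt_of_le_of_lt (limsup_le_of_le (by isBoundedDefault) ?_) hab
  filter_upwards [eventually_lt_of_limsup_lt ha, eventually_lt_of_limsup_lt hb] with x hu hv
  exact add_le_add hu.le hv.le

theorem le_liminf_add (u v : α → ℝ≥0∞) : liminf u f + liminf v f ≤ liminf (u + v) f := by
  refine le_of_forall_lt fun c hc => ?_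
  rcases eq_or_ne (liminf u f) 0 with hu | hu
  · rw [hu, zero_add] at hc
    exact hc.trans_le (liminf_le_liminf (.of_forall fun x => le_add_self))
  rcases eq_or_ne (liminf v f) 0 with hv | hv
  · rw [hv, add_zero] at hc
    exact hc.trans_le (liminf_le_liminf (.of_forall fun x => le_self_add))
  obtain ⟨a, ha, b, hb, hab⟩ := exists_lt_add_of_lt_add hc hu hv
  refine hab.trans_le (le_liminf_of_le (by isBoundedDefault) ?_)
  filter_upwards [eventually_lt_of_lt_liminf ha, eventually_lt_of_lt_liminf hb] with x hu hv
  exact add_le_add hu.le hv.le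

theorem tendsto_div_natCast_of_toReal {H : ℕ → ℝ≥0∞} (hH : ∀ L, H L ≠ ∞) {c : ℝ}
    (h : Tendsto (fun L => (H L).toReal / L) atTop (𝓝 c)) :
    Tendsto (fun L => H L / L) atTop (𝓝 (ENNReal.ofReal c)) := by
  refine (ENNReal.tendsto_ofReal h).congr' ?_
  filter_upwards [eventually_ne_atTop 0] with L hL
  rw [ENNReal.ofReal_div_of_pos (by positivity), ENNReal.ofReal_toReal (hH L),
    ENNReal.ofReal_natCast]

theorem exists_tendsto_div_of_subadditive {H : ℕ → ℝ≥0∞} (hH : ∀ L, H L ≤ L)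
    (hsub : ∀ a b, H (a + b) ≤ H a + H b) : ∃ d, Tendsto (fun L => H L / L) atTop (𝓝 d) := by
  have hfin L : H L ≠ ∞ := ne_top_of_le_ne_top (natCast_ne_top L) (hH L)
  have hu : Subadditive fun L => (H L).toReal := fun a b => by
    rw [← toReal_add (hfin a) (hfin b)]
    exact toReal_mono (add_ne_top.2 ⟨hfin a, hfin b⟩) (hsub a b)
  have hbdd : BddBelow (range fun L => (H L).toReal / L) :=
    ⟨0, by rintro _ ⟨L, rfl⟩; positivity⟩
  exact ⟨_, tendsto_div_natCast_of_toReal hfin (hu.tendsto_lim hbdd)⟩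

theorem exists_tendsto_div_of_superadditive {H : ℕ → ℝ≥0∞} (hH : ∀ L, H L ≤ L)
    (hsup : ∀ a b, H a + H b ≤ H (a + b)) : ∃ d, Tendsto (fun L => H L / L) atTop (𝓝 d) := by
  have hfin L : H L ≠ ∞ := ne_top_of_le_ne_top (natCast_ne_top L) (hH L)
  have hu : Subadditive fun L => -(H L).toReal := fun a b => by
    rw [← neg_add, neg_le_neg_iff, ← toReal_add (hfin a) (hfin b)]
    exact toReal_mono (hfin _) (hsup a b)
  have hbdd : BddBelow (range fun L => -(H L).toReal / L) := by
    refine ⟨-1, ?_⟩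
    rintro _ ⟨L, rfl⟩
    dsimp only
    rw [neg_div, neg_le_neg_iff]
    exact div_le_one_of_le₀ (toReal_le_of_le_ofReal (by positivity) (by simpa using hH L))
      (by positivity)
  refine ⟨_, tendsto_div_natCast_of_toReal hfin ((hu.tendsto_lim hbdd).neg.congr fun L => ?_)⟩
  simp only [neg_div, neg_neg]

end ENNReal

theorem cnt_window_le (A : Set ℕ) (n L : ℕ) : cnt A (n + 1) (n + L) ≤ L := by
  rw [cnt, Nat.card_coe_set_eq]
  calc ((A ∩ Icc (n + 1) (n + L)).ncard : ℝ≥0∞) ≤ (Icc (n + 1) (n + L)).ncard := by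
        exact_mod_cast ncard_le_ncard inter_subset_right (finite_Icc _ _)
    _ = L := by simp

theorem cnt_window_add (A : Set ℕ) (n L₁ L₂ : ℕ) :
    cnt A (n + 1) (n + (L₁ + L₂)) = cnt A (n + 1) (n + L₁) + cnt A (n + L₁ + 1) (n + L₁ + L₂) := by
  have hunion : Icc (n + 1) (n + (L₁ + L₂)) =
      Icc (n + 1) (n + L₁) ∪ Icc (n + L₁ + 1) (n + L₁ + L₂) := by
    ext x; simp only [mem_Icc, mem_union]; omega
  have hdisj : Disjoint (A ∩ Icc (n + 1) (n + L₁)) (A ∩ Icc (n + L₁ + 1) (n + L₁ + L₂)) := by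
    rw [disjoint_left]
    rintro x ⟨-, hx₁⟩ ⟨-, hx₂⟩
    simp only [mem_Icc] at hx₁ hx₂; omega
  simp only [cnt, Nat.card_coe_set_eq]
  rw [hunion, inter_union_distrib_left, ncard_union_eq hdisj ((finite_Icc _ _).inter_of_right A)
    ((finite_Icc _ _).inter_of_right A), Nat.cast_add]

noncomputable def upperWindowCount (A : Set ℕ) (L : ℕ) : ℝ≥0∞ :=
  limsup (fun n => cnt A (n + 1) (n + L)) atTop

noncomputable def lowerWindowCount (A : Set ℕ) (L : ℕ) : ℝ≥0∞ :=
  liminf (fun n => cnt A (n + 1) (n + L)) atTop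

theorem upperWindowCount_le (A : Set ℕ) (L : ℕ) : upperWindowCount A L ≤ L :=
  limsup_le_of_le (by isBoundedDefault) (.of_forall fun n => cnt_window_le A n L)

theorem lowerWindowCount_le (A : Set ℕ) (L : ℕ) : lowerWindowCount A L ≤ L :=
  (liminf_le_limsup).trans (upperWindowCount_le A L)

theorem upperWindowCount_add_le (A : Set ℕ) (L₁ L₂ : ℕ) :
    upperWindowCount A (L₁ + L₂) ≤ upperWindowCount A L₁ + upperWindowCount A L₂ := by
  have hshift := limsup_nat_add (fun n => cnt A (n + 1) (n + L₂)) L₁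
  simp only [upperWindowCount, cnt_window_add, ← hshift, add_right_comm _ L₁ 1]
  exact ENNReal.limsup_add_le' _ _

theorem add_le_lowerWindowCount_add (A : Set ℕ) (L₁ L₂ : ℕ) :
    lowerWindowCount A L₁ + lowerWindowCount A L₂ ≤ lowerWindowCount A (L₁ + L₂) := by
  have hshift := liminf_nat_add (fun n => cnt A (n + 1) (n + L₂)) L₁
  simp only [lowerWindowCount, cnt_window_add, ← hshift, add_right_comm _ L₁ 1]
  exact ENNReal.le_liminf_add _ _

theorem limsup_cnt_window_div (A : Set ℕ) (L : ℕ) {s : ℕ} (hs : s ≠ 0) :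
    limsup (fun n => cnt A (n + 1) (n + L) / s) atTop = upperWindowCount A L / s := by
  simp only [div_eq_mul_inv]
  rw [ENNReal.limsup_mul_const_of_ne_top (ENNReal.inv_ne_top.2 (Nat.cast_ne_zero.2 hs)), mul_comm,
    upperWindowCount]

theorem liminf_cnt_window_div (A : Set ℕ) (L : ℕ) {s : ℕ} (hs : s ≠ 0) :
    liminf (fun n => cnt A (n + 1) (n + L) / s) atTop = lowerWindowCount A L / s := by
  simp only [div_eq_mul_inv]
  rw [ENNReal.liminf_mul_const_of_ne_top (ENNReal.inv_ne_top.2 (Nat.cast_ne_zero.2 hs)), mul_comm,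
    lowerWindowCount]

theorem tendsto_natFloor_div {m : ℕ → ℝ} (hm : ∀ᶠ s in atTop, 0 ≤ m s) {k : ℝ}
    (hlim : Tendsto (fun s : ℕ => m s / s) atTop (𝓝 k)) :
    Tendsto (fun s : ℕ => (⌊m s⌋₊ : ℝ≥0∞) / s) atTop (𝓝 (ENNReal.ofReal k)) := by
  refine ENNReal.tendsto_div_natCast_of_toReal (fun s => ENNReal.natCast_ne_top _) ?_
  simp only [ENNReal.toReal_natCast]
  have hlow : Tendsto (fun s : ℕ => m s / s - 1 / s) atTop (𝓝 k) := by
    simpa using hlim.sub tendsto_one_div_atTop_nhds_zero_nat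
  refine tendsto_of_tendsto_of_tendsto_of_le_of_le' hlow hlim ?_ ?_
  · refine .of_forall fun s => ?_
    rw [← sub_div]
    gcongr
    exact (Nat.sub_one_lt_floor (m s)).le
  · filter_upwards [hm] with s hs
    gcongr
    exact Nat.floor_le hs

theorem tendsto_apply_natFloor_div {H : ℕ → ℝ≥0∞} (hH : ∀ L, H L ≤ L) {d : ℝ≥0∞}
    (hd : Tendsto (fun L => H L / L) atTop (𝓝 d)) {m : ℕ → ℝ} (h1 : ∀ᶠ s in atTop, 1 ≤ m s)
    {k : ℝ} (hk : 0 ≤ k) (hlim : Tendsto (fun s : ℕ => m s / s) atTop (𝓝 k)) :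
    Tendsto (fun s : ℕ => H ⌊m s⌋₊ / s) atTop (𝓝 (ENNReal.ofReal k * d)) := by
  have hfloor := tendsto_natFloor_div (h1.mono fun s hs => zero_le_one.trans hs) hlim
  rcases hk.eq_or_lt with rfl | hk
  · rw [ENNReal.ofReal_zero] at hfloor ⊢
    rw [zero_mul]
    exact tendsto_of_tendsto_of_tendsto_of_le_of_le tendsto_const_nhds hfloor (fun _ => zero_le)
      fun s => ENNReal.div_le_div_right (hH _) _
  have hm : Tendsto (fun s => ⌊m s⌋₊) atTop atTop :=
    tendsto_nat_floor_atTop.comp (Tendsto.num tendsto_natCast_atTop_atTop hk hlim)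
  rw [mul_comm]
  refine (ENNReal.Tendsto.mul (hd.comp hm) (.inr ENNReal.ofReal_ne_top) hfloor
    (.inl (ENNReal.ofReal_pos.2 hk).ne')).congr' ?_
  filter_upwards [h1] with s hs
  have hpos : (⌊m s⌋₊ : ℝ≥0∞) ≠ 0 := by simpa using hs
  simp only [Function.comp_apply]
  rw [← mul_div_assoc, ENNReal.div_mul_cancel hpos (ENNReal.natCast_ne_top _)]

theorem tendsto_limsup_cnt_window_div {A : Set ℕ} {d : ℝ≥0∞}
    (hd : Tendsto (fun L => upperWindowCount A L / L) atTop (𝓝 d)) {m : ℕ → ℝ}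
    (h1 : ∀ᶠ s in atTop, 1 ≤ m s) {k : ℝ} (hk : 0 ≤ k)
    (hlim : Tendsto (fun s : ℕ => m s / s) atTop (𝓝 k)) :
    Tendsto (fun s : ℕ => limsup (fun n => cnt A (n + 1) (n + ⌊m s⌋₊) / s) atTop) atTop
      (𝓝 (ENNReal.ofReal k * d)) := by
  refine (tendsto_apply_natFloor_div (upperWindowCount_le A) hd h1 hk hlim).congr' ?_
  filter_upwards [eventually_ne_atTop 0] with s hs
  exact (limsup_cnt_window_div A _ hs).symm

theorem tendsto_liminf_cnt_window_div {A : Set ℕ} {d : ℝ≥0∞}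
    (hd : Tendsto (fun L => lowerWindowCount A L / L) atTop (𝓝 d)) {m : ℕ → ℝ}
    (h1 : ∀ᶠ s in atTop, 1 ≤ m s) {k : ℝ} (hk : 0 ≤ k)
    (hlim : Tendsto (fun s : ℕ => m s / s) atTop (𝓝 k)) :
    Tendsto (fun s : ℕ => liminf (fun n => cnt A (n + 1) (n + ⌊m s⌋₊) / s) atTop) atTop
      (𝓝 (ENNReal.ofReal k * d)) := by
  refine (tendsto_apply_natFloor_div (lowerWindowCount_le A) hd h1 hk hlim).congr' ?_
  filter_upwards [eventually_ne_atTop 0] with s hs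
  exact (liminf_cnt_window_div A _ hs).symm

theorem stmt17_general (m : ℕ → ℝ) (h1 : ∀ n, 1 ≤ m n) (k : ℝ) (hk : 0 ≤ k)
    (hlim : Filter.Tendsto (fun n : ℕ => m n / (n : ℝ)) Filter.atTop (nhds k)) (A : Set ℕ) :
    (BdUL m A = BdUU m A ∧ BdUU m A = ENNReal.ofReal k * BdUU (fun n => (n : ℝ)) A) ∧
      (BdLL m A = BdLU m A ∧ BdLU m A = ENNReal.ofReal k * BdLL (fun n => (n : ℝ)) A) := by
  obtain ⟨dU, hdU⟩ := ENNReal.exists_tendsto_div_of_subadditive (upperWindowCount_le A)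
    (upperWindowCount_add_le A)
  obtain ⟨dL, hdL⟩ := ENNReal.exists_tendsto_div_of_superadditive (lowerWindowCount_le A)
    (add_le_lowerWindowCount_add A)
  have hid₁ : ∀ᶠ s : ℕ in atTop, 1 ≤ (s : ℝ) :=
    (eventually_ge_atTop 1).mono fun s hs => Nat.one_le_cast.2 hs
  have hid : Tendsto (fun s : ℕ => (s : ℝ) / s) atTop (𝓝 1) :=
    tendsto_const_nhds.congr' ((eventually_ne_atTop 0).mono fun s hs => (div_self (by simpa)).symm)
  have hU := tendsto_limsup_cnt_window_div hdU (.of_forall h1) hk hlim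
  have hL := tendsto_liminf_cnt_window_div hdL (.of_forall h1) hk hlim
  have hU₁ := tendsto_limsup_cnt_window_div hdU hid₁ zero_le_one hid
  have hL₁ := tendsto_liminf_cnt_window_div hdL hid₁ zero_le_one hid
  simp only [ENNReal.ofReal_one, one_mul] at hU₁ hL₁
  simp only [BdUU, BdUL, BdLU, BdLL, hU.limsup_eq, hU.liminf_eq, hL.limsup_eq, hL.liminf_eq,
    hU₁.limsup_eq, hL₁.liminf_eq, and_self]

theorem stmt17 (m : ℕ → ℝ) (hm : Monotone m) (h1 : ∀ n, 1 ≤ m n) (k : ℝ) (hk : 0 ≤ k)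
    (hlim : Filter.Tendsto (fun n : ℕ => m n / (n : ℝ)) Filter.atTop (nhds k)) (A : Set ℕ) :
    (BdUL m A = BdUU m A ∧ BdUU m A = ENNReal.ofReal k * BdUU (fun n => (n : ℝ)) A) ∧
      (BdLL m A = BdLU m A ∧ BdLU m A = ENNReal.ofReal k * BdLL (fun n => (n : ℝ)) A) :=
  stmt17_general m h1 k hk hlim A
end
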